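/- All inference rules of IF_p preserve truth under any fixed interpretation in both top-down and bottom-up directions: for each rule of IF_p and each interpretation *, the premise is true under * if and only if the conclusion is true under *. -/
import Mathlib


/-- Cirquents: NNF propositional formulas; literals are (atom, sign),
    each ∨-occurrence carries a cluster ID (a natural number). -/
inductive Cirq : Type where
  | lit : ℕ → Bool → Cirq
  | and : Cirq → Cirq → Cirq
  | or  : ℕ → Cirq → Cirq → Cirq

/-- Metatruth w.r.t. an interpretation `I` and metaselection `f`
    (`f k = true` means `left`). -/
def metatrue (I : ℕ → Bool) (f : ℕ → Bool) : Cirq → Prop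
  | .lit n s => I n = s
  | .and A B => metatrue I f A ∧ metatrue I f B
  | .or k A B => (f k = true ∧ metatrue I f A) ∨ (f k = false ∧ metatrue I f B)

/-- Classical truth of the underlying formula (cluster IDs erased). -/
def ctrue (I : ℕ → Bool) : Cirq → Prop
  | .lit n s => I n = s
  | .and A B => ctrue I A ∧ ctrue I B
  | .or _ A B => ctrue I A ∨ ctrue I B

/-- Truth of a cirquent under an interpretation. -/
def cirqTrue (I : ℕ → Bool) (C : Cirq) : Prop := ∃ f : ℕ → Bool, metatrue I f C

def valid (C : Cirq) : Prop := ∀ I : ℕ → Bool, cirqTrue I C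

/-- Number of ∨-occurrences in cluster `k`. -/
def cnt (k : ℕ) : Cirq → ℕ
  | .lit _ _ => 0
  | .and A B => cnt k A + cnt k B
  | .or m A B => (if m = k then 1 else 0) + cnt k A + cnt k B

/-- Set of cluster IDs occurring in a cirquent. -/
def ids : Cirq → Set ℕ
  | .lit _ _ => ∅
  | .and A B => ids A ∪ ids B
  | .or k A B => insert k (ids A ∪ ids B)

/-- A cirquent is classical iff every cluster is a singleton. -/
def classicalCirq (C : Cirq) : Prop := ∀ k : ℕ, cnt k C ≤ 1

/-- Renaming of cluster IDs. -/
def rename (ρ : ℕ → ℕ) : Cirq → Cirq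
  | .lit n s => .lit n s
  | .and A B => .and (rename ρ A) (rename ρ B)
  | .or k A B => .or (ρ k) (rename ρ A) (rename ρ B)

/-- One-hole cirquent contexts. -/
inductive Ctx : Type where
  | hole : Ctx
  | andL : Ctx → Cirq → Ctx
  | andR : Cirq → Ctx → Ctx
  | orL : ℕ → Ctx → Cirq → Ctx
  | orR : ℕ → Cirq → Ctx → Ctx

/-- Plugging a cirquent into the hole of a context. -/
def Ctx.plug : Ctx → Cirq → Cirq
  | .hole, X => X
  | .andL Φ C, X => .and (Φ.plug X) C
  | .andR C Φ, X => .and C (Φ.plug X)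
  | .orL k Φ C, X => .or k (Φ.plug X) C
  | .orR k C Φ, X => .or k C (Φ.plug X)

/-- The inference rules of IF_p, as a one-step relation premise ↦ conclusion. -/
inductive Step : Cirq → Cirq → Prop where
  | ruleIL (Φ Ψ : Ctx) (A B C : Cirq) (k : ℕ) :
      Step (Φ.plug (.or k (Ψ.plug A) C)) (Φ.plug (.or k (Ψ.plug (.or k A B)) C))
  | ruleIR (Φ Ψ : Ctx) (A B C : Cirq) (k : ℕ) :
      Step (Φ.plug (.or k C (Ψ.plug A))) (Φ.plug (.or k C (Ψ.plug (.or k B A))))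
  | ruleIIL_and (Φ : Ctx) (A B C : Cirq) (k : ℕ) :
      Step (Φ.plug (.or k (.and A C) (.and B C))) (Φ.plug (.and (.or k A B) C))
  | ruleIIR_and (Φ : Ctx) (A B C : Cirq) (k : ℕ) :
      Step (Φ.plug (.or k (.and C A) (.and C B))) (Φ.plug (.and C (.or k A B)))
  | ruleIIL_orN (Φ : Ctx) (A B C : Cirq) (k l : ℕ)
      (hns : 2 ≤ cnt l (Φ.plug (.or l (.or k A B) C))) :
      Step (Φ.plug (.or k (.or l A C) (.or l B C))) (Φ.plug (.or l (.or k A B) C))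
  | ruleIIR_orN (Φ : Ctx) (A B C : Cirq) (k l : ℕ)
      (hns : 2 ≤ cnt l (Φ.plug (.or l C (.or k A B)))) :
      Step (Φ.plug (.or k (.or l C A) (.or l C B))) (Φ.plug (.or l C (.or k A B)))
  | ruleIIL_orS (Φ : Ctx) (A B C : Cirq) (ρ₁ ρ₂ : ℕ → ℕ) (k i j m : ℕ)
      (hij : i ≠ j) (hik : i ≠ k) (hjk : j ≠ k) (him : i ≠ m) (hjm : j ≠ m) (hkm : k ≠ m)
      (hi : cnt i (Φ.plug (.or k (.or i A (rename ρ₁ C)) (.or j B (rename ρ₂ C)))) = 1)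
      (hj : cnt j (Φ.plug (.or k (.or i A (rename ρ₁ C)) (.or j B (rename ρ₂ C)))) = 1)
      (hm : cnt m (Φ.plug (.or m (.or k A B) C)) = 1)
      (hfix : ∀ x ∈ ids C, cnt x (Φ.plug (.or m (.or k A B) C)) ≠ 1 → ρ₁ x = x ∧ ρ₂ x = x)
      (hfresh : ∀ x ∈ ids C, cnt x (Φ.plug (.or m (.or k A B) C)) = 1 →
        cnt (ρ₁ x) (Φ.plug (.or k (.or i A (rename ρ₁ C)) (.or j B (rename ρ₂ C)))) = 1 ∧
        cnt (ρ₂ x) (Φ.plug (.or k (.or i A (rename ρ₁ C)) (.or j B (rename ρ₂ C)))) = 1 ∧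
        ρ₁ x ≠ ρ₂ x)
      (hinj₁ : Set.InjOn ρ₁ (ids C)) (hinj₂ : Set.InjOn ρ₂ (ids C)) :
      Step (Φ.plug (.or k (.or i A (rename ρ₁ C)) (.or j B (rename ρ₂ C))))
           (Φ.plug (.or m (.or k A B) C))
  | ruleIIR_orS (Φ : Ctx) (A B C : Cirq) (ρ₁ ρ₂ : ℕ → ℕ) (k i j m : ℕ)
      (hij : i ≠ j) (hik : i ≠ k) (hjk : j ≠ k) (him : i ≠ m) (hjm : j ≠ m) (hkm : k ≠ m)
      (hi : cnt i (Φ.plug (.or k (.or i (rename ρ₁ C) A) (.or j (rename ρ₂ C) B))) = 1)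
      (hj : cnt j (Φ.plug (.or k (.or i (rename ρ₁ C) A) (.or j (rename ρ₂ C) B))) = 1)
      (hm : cnt m (Φ.plug (.or m C (.or k A B))) = 1)
      (hfix : ∀ x ∈ ids C, cnt x (Φ.plug (.or m C (.or k A B))) ≠ 1 → ρ₁ x = x ∧ ρ₂ x = x)
      (hfresh : ∀ x ∈ ids C, cnt x (Φ.plug (.or m C (.or k A B))) = 1 →
        cnt (ρ₁ x) (Φ.plug (.or k (.or i (rename ρ₁ C) A) (.or j (rename ρ₂ C) B))) = 1 ∧
        cnt (ρ₂ x) (Φ.plug (.or k (.or i (rename ρ₁ C) A) (.or j (rename ρ₂ C) B))) = 1 ∧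
        ρ₁ x ≠ ρ₂ x)
      (hinj₁ : Set.InjOn ρ₁ (ids C)) (hinj₂ : Set.InjOn ρ₂ (ids C)) :
      Step (Φ.plug (.or k (.or i (rename ρ₁ C) A) (.or j (rename ρ₂ C) B)))
           (Φ.plug (.or m C (.or k A B)))
  | ruleIII_and (Φ : Ctx) (A B C D : Cirq) (k : ℕ) :
      Step (Φ.plug (.or k (.and A C) (.and B D))) (Φ.plug (.and (.or k A B) (.or k C D)))
  | ruleIII_orN (Φ : Ctx) (A B C D : Cirq) (k l : ℕ)
      (hns : 2 ≤ cnt l (Φ.plug (.or l (.or k A B) (.or k C D)))) :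
      Step (Φ.plug (.or k (.or l A C) (.or l B D))) (Φ.plug (.or l (.or k A B) (.or k C D)))
  | ruleIII_orS (Φ : Ctx) (A B C D : Cirq) (k i j m : ℕ)
      (hij : i ≠ j) (hik : i ≠ k) (hjk : j ≠ k) (him : i ≠ m) (hjm : j ≠ m) (hkm : k ≠ m)
      (hi : cnt i (Φ.plug (.or k (.or i A C) (.or j B D))) = 1)
      (hj : cnt j (Φ.plug (.or k (.or i A C) (.or j B D))) = 1)
      (hm : cnt m (Φ.plug (.or m (.or k A B) (.or k C D))) = 1) :
      Step (Φ.plug (.or k (.or i A C) (.or j B D))) (Φ.plug (.or m (.or k A B) (.or k C D)))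

/-- Provability in IF_p: start from a classical tautology, apply rules. -/
inductive Proves : Cirq → Prop where
  | ax (C : Cirq) (hc : classicalCirq C) (ht : ∀ I : ℕ → Bool, ctrue I C) : Proves C
  | step (P C : Cirq) (hp : Proves P) (hs : Step P C) : Proves C

open Classical

def cntCtx (k : ℕ) : Ctx → ℕ
  | .hole => 0
  | .andL Φ C => cntCtx k Φ + cnt k C
  | .andR C Φ => cnt k C + cntCtx k Φ
  | .orL m Φ C => (if m = k then 1 else 0) + cntCtx k Φ + cnt k C
  | .orR m C Φ => (if m = k then 1 else 0) + cnt k C + cntCtx k Φ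

lemma cnt_plug (k : ℕ) (Φ : Ctx) (X : Cirq) :
    cnt k (Φ.plug X) = cntCtx k Φ + cnt k X := by
  induction Φ with
  | hole => simp [Ctx.plug, cntCtx]
  | andL Φ C ih => simp [Ctx.plug, cntCtx, cnt, ih]; omega
  | andR C Φ ih => simp [Ctx.plug, cntCtx, cnt, ih]; omega
  | orL m Φ C ih => simp [Ctx.plug, cntCtx, cnt, ih]; omega
  | orR m C Φ ih => simp [Ctx.plug, cntCtx, cnt, ih]; omega

lemma mem_ids_iff_cnt {k : ℕ} {X : Cirq} : k ∈ ids X ↔ cnt k X ≠ 0 := by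
  induction X with
  | lit n s => simp [ids, cnt]
  | and A B ihA ihB => simp [ids, cnt, ihA, ihB]; omega
  | or m A B ihA ihB =>
    simp [ids, cnt, ihA, ihB]
    by_cases h : m = k <;> simp [h, eq_comm] <;> omega

lemma metatrue_agree {I f g : ℕ → Bool} {X : Cirq}
    (h : ∀ x ∈ ids X, f x = g x) : metatrue I f X ↔ metatrue I g X := by
  induction X with
  | lit n s => simp [metatrue]
  | and A B ihA ihB =>
    simp only [metatrue]
    rw [ihA (fun x hx => h x (Or.inl hx)), ihB (fun x hx => h x (Or.inr hx))]
  | or m A B ihA ihB =>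
    simp only [metatrue]
    rw [h m (by simp [ids]),
      ihA (fun x hx => h x (by simp [ids, hx])),
      ihB (fun x hx => h x (by simp [ids, hx]))]

lemma metatrue_rename {I f : ℕ → Bool} {ρ : ℕ → ℕ} {X : Cirq} :
    metatrue I f (rename ρ X) ↔ metatrue I (f ∘ ρ) X := by
  induction X with
  | lit n s => simp [rename, metatrue]
  | and A B ihA ihB => simp [rename, metatrue, ihA, ihB]
  | or m A B ihA ihB => simp [rename, metatrue, ihA, ihB, Function.comp]

lemma cnt_rename_le (ρ : ℕ → ℕ) (x : ℕ) (X : Cirq) :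
    cnt x X ≤ cnt (ρ x) (rename ρ X) := by
  induction X with
  | lit n s => simp [rename, cnt]
  | and A B ihA ihB => simp [rename, cnt]; omega
  | or m A B ihA ihB =>
    simp only [rename, cnt]
    by_cases h : m = x
    · subst h; simp; omega
    · have : (if m = x then 1 else 0) = 0 := by simp [h]
      rw [this]
      have : (if ρ m = ρ x then (1:ℕ) else 0) ≥ 0 := by positivity
      omega

lemma plug_mono {I f g : ℕ → Bool} {X Y : Cirq} (Φ : Ctx)
    (h1 : metatrue I f X → metatrue I g Y)
    (h2 : ∀ x, cntCtx x Φ ≠ 0 → f x = g x) :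
    metatrue I f (Φ.plug X) → metatrue I g (Φ.plug Y) := by
  induction Φ with
  | hole => exact h1
  | andL Φ C ih =>
    intro ⟨ha, hb⟩
    refine ⟨ih (fun x hx => h2 x (by simp [cntCtx]; omega)) ha, ?_⟩
    rw [metatrue_agree (g := g)] at hb
    · exact hb
    · intro x hx
      exact h2 x (by simp [cntCtx]; have := mem_ids_iff_cnt.mp hx; omega)
  | andR C Φ ih =>
    intro ⟨ha, hb⟩
    refine ⟨?_, ih (fun x hx => h2 x (by simp [cntCtx]; omega)) hb⟩
    rw [metatrue_agree (g := g)] at ha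
    · exact ha
    · intro x hx
      exact h2 x (by simp [cntCtx]; have := mem_ids_iff_cnt.mp hx; omega)
  | orL m Φ C ih =>
    intro hor
    have hm : f m = g m := h2 m (by simp [cntCtx])
    rcases hor with ⟨hl, ha⟩ | ⟨hl, ha⟩
    · exact Or.inl ⟨hm ▸ hl, ih (fun x hx => h2 x (by simp [cntCtx]; omega)) ha⟩
    · refine Or.inr ⟨hm ▸ hl, ?_⟩
      rw [metatrue_agree (g := g)] at ha
      · exact ha
      · intro x hx
        exact h2 x (by simp [cntCtx]; have := mem_ids_iff_cnt.mp hx; omega)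
  | orR m C Φ ih =>
    intro hor
    have hm : f m = g m := h2 m (by simp [cntCtx])
    rcases hor with ⟨hl, ha⟩ | ⟨hl, ha⟩
    · refine Or.inl ⟨hm ▸ hl, ?_⟩
      rw [metatrue_agree (g := g)] at ha
      · exact ha
      · intro x hx
        exact h2 x (by simp [cntCtx]; have := mem_ids_iff_cnt.mp hx; omega)
    · exact Or.inr ⟨hm ▸ hl, ih (fun x hx => h2 x (by simp [cntCtx]; omega)) ha⟩

lemma plug_iff {I f : ℕ → Bool} {X Y : Cirq} (Φ : Ctx)
    (h1 : metatrue I f X ↔ metatrue I f Y) :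
    metatrue I f (Φ.plug X) ↔ metatrue I f (Φ.plug Y) :=
  ⟨plug_mono Φ h1.mp (fun _ _ => rfl), plug_mono Φ h1.mpr (fun _ _ => rfl)⟩
theorem stmt12 (P C : Cirq) (h : Step P C) (I : ℕ → Bool) :
    cirqTrue I P ↔ cirqTrue I C := by
  induction h with
  | ruleIL Φ Ψ A B C k =>
    refine exists_congr fun f => plug_iff Φ ?_
    cases hk : f k
    · simp [metatrue, hk]
    · simp only [metatrue, hk]
      simp only [true_and, false_and, Bool.true_eq_false, or_false, false_or]
      exact plug_iff Ψ (by simp [metatrue, hk])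
  | ruleIR Φ Ψ A B C k =>
    refine exists_congr fun f => plug_iff Φ ?_
    cases hk : f k
    · simp only [metatrue, hk]
      simp only [true_and, false_and, Bool.false_eq_true, or_false, false_or, and_true, true_or, or_true]
      exact plug_iff Ψ (by simp [metatrue, hk])
    · simp [metatrue, hk]
  | ruleIIL_and Φ A B C k =>
    refine exists_congr fun f => plug_iff Φ ?_
    cases hk : f k <;> simp [metatrue, hk]
  | ruleIIR_and Φ A B C k =>
    refine exists_congr fun f => plug_iff Φ ?_
    cases hk : f k <;> simp [metatrue, hk]
  | ruleIIL_orN Φ A B C k l hns =>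
    refine exists_congr fun f => plug_iff Φ ?_
    cases hk : f k <;> cases hl : f l <;> simp [metatrue, hk, hl]
  | ruleIIR_orN Φ A B C k l hns =>
    refine exists_congr fun f => plug_iff Φ ?_
    cases hk : f k <;> cases hl : f l <;> simp [metatrue, hk, hl]
  | ruleIII_and Φ A B C D k =>
    refine exists_congr fun f => plug_iff Φ ?_
    cases hk : f k <;> simp [metatrue, hk]
  | ruleIII_orN Φ A B C D k l hns =>
    refine exists_congr fun f => plug_iff Φ ?_
    cases hk : f k <;> cases hl : f l <;> simp [metatrue, hk, hl]
  | ruleIII_orS Φ A B C D k i j m hij hik hjk him hjm hkm hi hj hm =>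
    rw [cnt_plug] at hi hj hm
    simp only [cnt, if_neg (Ne.symm hik), if_neg (Ne.symm hij), if_neg (Ne.symm hjk),
      if_neg hij, if_neg hkm, eq_self_iff_true, if_true] at hi hj hm
    constructor
    · rintro ⟨f, hf⟩
      refine ⟨fun x => if x = m then (if f k = true then f i else f j) else f x, ?_⟩
      set g : ℕ → Bool := fun x => if x = m then (if f k = true then f i else f j) else f x with hgdef
      have hgm : g m = (if f k = true then f i else f j) := by simp [hgdef]
      have hgo : ∀ x, x ≠ m → g x = f x := fun x hx => by simp [hgdef, hx]
      have hagree : ∀ E : Cirq, cnt m E = 0 → (metatrue I f E ↔ metatrue I g E) :=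
        fun E hE => metatrue_agree (fun x hx =>
          (hgo x (by rintro rfl; exact (mem_ids_iff_cnt.mp hx) hE)).symm)
      refine plug_mono Φ ?_ (fun x hx => (hgo x (by rintro rfl; omega)).symm) hf
      intro hX
      have hgk : g k = f k := hgo k hkm
      simp only [metatrue] at hX ⊢
      rcases hX with ⟨hk, ⟨hi2, hA⟩ | ⟨hi2, hA⟩⟩ | ⟨hk, ⟨hj2, hB⟩ | ⟨hj2, hB⟩⟩
      · exact Or.inl ⟨by simp [hgm, hk, hi2], Or.inl ⟨by rw [hgk, hk],
          (hagree A (by omega)).mp hA⟩⟩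
      · exact Or.inr ⟨by simp [hgm, hk, hi2], Or.inl ⟨by rw [hgk, hk],
          (hagree C (by omega)).mp hA⟩⟩
      · exact Or.inl ⟨by simp [hgm, hk, hj2], Or.inr ⟨by rw [hgk, hk],
          (hagree B (by omega)).mp hB⟩⟩
      · exact Or.inr ⟨by simp [hgm, hk, hj2], Or.inr ⟨by rw [hgk, hk],
          (hagree D (by omega)).mp hB⟩⟩
    · rintro ⟨g, hg⟩
      refine ⟨fun x => if x = i then g m else if x = j then g m else g x, ?_⟩
      set f : ℕ → Bool := fun x => if x = i then g m else if x = j then g m else g x with hfdef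
      have hfi : f i = g m := by simp [hfdef]
      have hfj : f j = g m := by simp [hfdef, hij]
      have hfo : ∀ x, x ≠ i → x ≠ j → f x = g x := fun x h1 h2 => by simp [hfdef, h1, h2]
      have hagree : ∀ E : Cirq, cnt i E = 0 → cnt j E = 0 →
          (metatrue I g E ↔ metatrue I f E) :=
        fun E hE1 hE2 => metatrue_agree (fun x hx =>
          (hfo x (by rintro rfl; exact (mem_ids_iff_cnt.mp hx) hE1)
             (by rintro rfl; exact (mem_ids_iff_cnt.mp hx) hE2)).symm)
      refine plug_mono Φ ?_ (fun x hx =>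
        (hfo x (by rintro rfl; omega) (by rintro rfl; omega)).symm) hg
      intro hY
      have hfk : f k = g k := hfo k (Ne.symm hik) (Ne.symm hjk)
      simp only [metatrue] at hY ⊢
      rcases hY with ⟨hmv, ⟨hkv, hA⟩ | ⟨hkv, hA⟩⟩ | ⟨hmv, ⟨hkv, hB⟩ | ⟨hkv, hB⟩⟩
      · exact Or.inl ⟨by rw [hfk, hkv], Or.inl ⟨by rw [hfi, hmv],
          (hagree A (by omega) (by omega)).mp hA⟩⟩
      · exact Or.inr ⟨by rw [hfk, hkv], Or.inl ⟨by rw [hfj, hmv],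
          (hagree B (by omega) (by omega)).mp hA⟩⟩
      · exact Or.inl ⟨by rw [hfk, hkv], Or.inr ⟨by rw [hfi, hmv],
          (hagree C (by omega) (by omega)).mp hB⟩⟩
      · exact Or.inr ⟨by rw [hfk, hkv], Or.inr ⟨by rw [hfj, hmv],
          (hagree D (by omega) (by omega)).mp hB⟩⟩

  | ruleIIL_orS Φ A B C ρ₁ ρ₂ k i j m hij hik hjk him hjm hkm hi hj hm hfix hfresh hinj₁ hinj₂ =>
    classical
    have cntConcl : ∀ x, cnt x (Φ.plug (Cirq.or m (Cirq.or k A B) C)) =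
        cntCtx x Φ + ((if m = x then 1 else 0) +
          ((if k = x then 1 else 0) + cnt x A + cnt x B) + cnt x C) := by
      intro x; rw [cnt_plug]; rfl
    have cntPrem : ∀ x, cnt x (Φ.plug (Cirq.or k (Cirq.or i A (rename ρ₁ C))
        (Cirq.or j B (rename ρ₂ C)))) =
        cntCtx x Φ + ((if k = x then 1 else 0) +
          ((if i = x then 1 else 0) + cnt x A + cnt x (rename ρ₁ C)) +
          ((if j = x then 1 else 0) + cnt x B + cnt x (rename ρ₂ C))) := by
      intro x; rw [cnt_plug]; rfl
    have hi0 := cntPrem i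
    rw [hi, if_neg (Ne.symm hik), if_pos rfl, if_neg (Ne.symm hij)] at hi0
    have hj0 := cntPrem j
    rw [hj, if_neg (Ne.symm hjk), if_neg hij, if_pos rfl] at hj0
    have hm0 := cntConcl m
    rw [hm, if_pos rfl, if_neg hkm] at hm0
    have hiΦ : cntCtx i Φ = 0 := by omega
    have hiA : cnt i A = 0 := by omega
    have hiR1 : cnt i (rename ρ₁ C) = 0 := by omega
    have hiB : cnt i B = 0 := by omega
    have hiR2 : cnt i (rename ρ₂ C) = 0 := by omega
    have hjΦ : cntCtx j Φ = 0 := by omega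
    have hjA : cnt j A = 0 := by omega
    have hjR1 : cnt j (rename ρ₁ C) = 0 := by omega
    have hjB : cnt j B = 0 := by omega
    have hjR2 : cnt j (rename ρ₂ C) = 0 := by omega
    have hmΦ : cntCtx m Φ = 0 := by omega
    have hmA : cnt m A = 0 := by omega
    have hmB : cnt m B = 0 := by omega
    have hmC : cnt m C = 0 := by omega
    constructor
    · rintro ⟨f, hf⟩
      set ρ : ℕ → ℕ := if f k = true then ρ₁ else ρ₂ with hρ
      set g : ℕ → Bool := fun x => if x = m then (if f k = true then f i else f j)
        else if x ∈ ids C ∧ cnt x (Φ.plug (Cirq.or m (Cirq.or k A B) C)) = 1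
          then f (ρ x) else f x with hgdef
      have hgm : g m = (if f k = true then f i else f j) := by simp [hgdef]
      have hgo : ∀ x, x ≠ m →
          ¬(x ∈ ids C ∧ cnt x (Φ.plug (Cirq.or m (Cirq.or k A B) C)) = 1) → g x = f x := by
        intro x h1 h2; simp only [hgdef]; rw [if_neg h1, if_neg h2]
      have hgS : ∀ x, x ∈ ids C → cnt x (Φ.plug (Cirq.or m (Cirq.or k A B) C)) = 1 →
          g x = f (ρ x) := by
        intro x h1 h2
        have hxm : x ≠ m := by rintro rfl; exact (mem_ids_iff_cnt.mp h1) hmC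
        simp only [hgdef]; rw [if_neg hxm, if_pos ⟨h1, h2⟩]
      have hCnot : ∀ x, x ∈ ids C → (cnt x A ≠ 0 ∨ cnt x B ≠ 0 ∨ cntCtx x Φ ≠ 0) →
          cnt x (Φ.plug (Cirq.or m (Cirq.or k A B) C)) ≠ 1 := by
        intro x hx h
        have h1 := cntConcl x
        have h2 : cnt x C ≠ 0 := mem_ids_iff_cnt.mp hx
        omega
      refine ⟨g, plug_mono Φ ?_ ?_ hf⟩
      swap
      · intro x hx
        have hxm : x ≠ m := by rintro rfl; exact hx hmΦ
        exact (hgo x hxm (fun h => hCnot x h.1 (Or.inr (Or.inr hx)) h.2)).symm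
      intro hX
      have hgk : g k = f k := by
        refine hgo k hkm ?_
        rintro ⟨h1, h2⟩
        have h3 := cntConcl k
        rw [if_neg (Ne.symm hkm), if_pos rfl] at h3
        have h4 : cnt k C ≠ 0 := mem_ids_iff_cnt.mp h1
        omega
      have agreeA : ∀ x ∈ ids A, f x = g x := by
        intro x hx
        have hxA := mem_ids_iff_cnt.mp hx
        have hxm : x ≠ m := by rintro rfl; exact hxA hmA
        exact (hgo x hxm (fun h => hCnot x h.1 (Or.inl hxA) h.2)).symm
      have agreeB : ∀ x ∈ ids B, f x = g x := by
        intro x hx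
        have hxB := mem_ids_iff_cnt.mp hx
        have hxm : x ≠ m := by rintro rfl; exact hxB hmB
        exact (hgo x hxm (fun h => hCnot x h.1 (Or.inr (Or.inl hxB)) h.2)).symm
      have agreeC : ∀ x ∈ ids C, (f ∘ ρ) x = g x := by
        intro x hx
        by_cases h2 : cnt x (Φ.plug (Cirq.or m (Cirq.or k A B) C)) = 1
        · exact (hgS x hx h2).symm
        · obtain ⟨e1, e2⟩ := hfix x hx h2
          have hxm : x ≠ m := by rintro rfl; exact (mem_ids_iff_cnt.mp hx) hmC
          have hρx : ρ x = x := by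
            by_cases hfk : f k = true <;> simp [hρ, hfk, e1, e2]
          rw [hgo x hxm (fun h => h2 h.2), Function.comp_apply, hρx]
      simp only [metatrue] at hX ⊢
      rcases hX with ⟨hk, ⟨hi2, hA⟩ | ⟨hi2, hC⟩⟩ | ⟨hk, ⟨hj2, hB⟩ | ⟨hj2, hC⟩⟩
      · exact Or.inl ⟨by simp [hgm, hk, hi2], Or.inl ⟨by rw [hgk, hk],
          (metatrue_agree agreeA).mp hA⟩⟩
      · refine Or.inr ⟨by simp [hgm, hk, hi2], ?_⟩
        have hre : ρ = ρ₁ := by rw [hρ, if_pos hk]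
        exact (metatrue_agree agreeC).mp (by rw [hre]; exact metatrue_rename.mp hC)
      · exact Or.inl ⟨by simp [hgm, hk, hj2], Or.inr ⟨by rw [hgk, hk],
          (metatrue_agree agreeB).mp hB⟩⟩
      · refine Or.inr ⟨by simp [hgm, hk, hj2], ?_⟩
        have hre : ρ = ρ₂ := by rw [hρ, if_neg (by simp [hk])]
        exact (metatrue_agree agreeC).mp (by rw [hre]; exact metatrue_rename.mp hC)
    · rintro ⟨g, hg⟩
      set f : ℕ → Bool := fun y => if y = i ∨ y = j then g m
        else if h : ∃ x, x ∈ ids C ∧ cnt x (Φ.plug (Cirq.or m (Cirq.or k A B) C)) = 1 ∧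
            (ρ₁ x = y ∨ ρ₂ x = y) then g h.choose else g y with hfdef
      have hone : ∀ x ∈ ids C, 1 ≤ cnt x C :=
        fun x hx => Nat.one_le_iff_ne_zero.mpr (mem_ids_iff_cnt.mp hx)
      have hcntren : ∀ y x, x ∈ ids C → (ρ₁ x = y ∨ ρ₂ x = y) →
          1 ≤ cnt y (rename ρ₁ C) + cnt y (rename ρ₂ C) := by
        rintro y x hx (rfl | rfl)
        · have h1 := cnt_rename_le ρ₁ x C; have h2 := hone x hx; omega
        · have h1 := cnt_rename_le ρ₂ x C; have h2 := hone x hx; omega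
      have hsing : ∀ y x, x ∈ ids C → cnt x (Φ.plug (Cirq.or m (Cirq.or k A B) C)) = 1 →
          (ρ₁ x = y ∨ ρ₂ x = y) →
          cnt y (Φ.plug (Cirq.or k (Cirq.or i A (rename ρ₁ C)) (Cirq.or j B (rename ρ₂ C)))) = 1 := by
        rintro y x hx h1 (rfl | rfl)
        · exact (hfresh x hx h1).1
        · exact (hfresh x hx h1).2.1
      have hkey : ∀ y x, x ∈ ids C → cnt x (Φ.plug (Cirq.or m (Cirq.or k A B) C)) = 1 →
          (ρ₁ x = y ∨ ρ₂ x = y) →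
          y ≠ i ∧ y ≠ j ∧ y ≠ k ∧ cntCtx y Φ = 0 ∧ cnt y A = 0 ∧ cnt y B = 0 := by
        intro y x hx h1 hor
        have hs := hsing y x hx h1 hor
        have hr := hcntren y x hx hor
        rw [cntPrem y] at hs
        refine ⟨?_, ?_, ?_, by omega, by omega, by omega⟩
        · rintro rfl; simp only [eq_self_iff_true, if_true] at hs; omega
        · rintro rfl; simp only [eq_self_iff_true, if_true] at hs; omega
        · rintro rfl; simp only [eq_self_iff_true, if_true] at hs; omega
      have hchoose : ∀ y x, x ∈ ids C → cnt x (Φ.plug (Cirq.or m (Cirq.or k A B) C)) = 1 →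
          (ρ₁ x = y ∨ ρ₂ x = y) → f y = g x := by
        intro y x hx h1 hor
        obtain ⟨hyi, hyj, -, -, -, -⟩ := hkey y x hx h1 hor
        have hex : ∃ x', x' ∈ ids C ∧ cnt x' (Φ.plug (Cirq.or m (Cirq.or k A B) C)) = 1 ∧
            (ρ₁ x' = y ∨ ρ₂ x' = y) := ⟨x, hx, h1, hor⟩
        have hstep : f y = g hex.choose := by
          simp only [hfdef]; rw [if_neg (not_or.mpr ⟨hyi, hyj⟩), dif_pos hex]
        rw [hstep]
        obtain ⟨hx', h1', hor'⟩ := hex.choose_spec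
        suffices hceq : hex.choose = x by rw [hceq]
        have hs := hsing y x hx h1 hor
        rw [cntPrem y] at hs
        rcases hor' with e1 | e2 <;> rcases hor with o1 | o2
        · exact hinj₁ hx' hx (e1.trans o1.symm)
        · exfalso
          have a1 := cnt_rename_le ρ₁ hex.choose C; rw [e1] at a1
          have a2 := cnt_rename_le ρ₂ x C; rw [o2] at a2
          have b1 := hone _ hx'; have b2 := hone x hx
          omega
        · exfalso
          have a1 := cnt_rename_le ρ₂ hex.choose C; rw [e2] at a1
          have a2 := cnt_rename_le ρ₁ x C; rw [o1] at a2
          have b1 := hone _ hx'; have b2 := hone x hx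
          omega
        · exact hinj₂ hx' hx (e2.trans o2.symm)
      have hfother : ∀ y, y ≠ i → y ≠ j →
          (¬ ∃ x, x ∈ ids C ∧ cnt x (Φ.plug (Cirq.or m (Cirq.or k A B) C)) = 1 ∧
            (ρ₁ x = y ∨ ρ₂ x = y)) → f y = g y := by
        intro y h1 h2 h3; simp only [hfdef]; rw [if_neg (not_or.mpr ⟨h1, h2⟩), dif_neg h3]
      have hfi : f i = g m := by simp [hfdef]
      have hfj : f j = g m := by simp [hfdef]
      refine ⟨f, plug_mono Φ ?_ ?_ hg⟩
      swap
      · intro x hx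
        have hxi : x ≠ i := by rintro rfl; exact hx hiΦ
        have hxj : x ≠ j := by rintro rfl; exact hx hjΦ
        refine (hfother x hxi hxj ?_).symm
        rintro ⟨x', hx', h1', hor'⟩
        exact hx (hkey x x' hx' h1' hor').2.2.2.1
      intro hY
      have hfk : f k = g k := by
        refine hfother k (Ne.symm hik) (Ne.symm hjk) ?_
        rintro ⟨x', hx', h1', hor'⟩
        exact (hkey k x' hx' h1' hor').2.2.1 rfl
      have agreeA : ∀ x ∈ ids A, g x = f x := by
        intro x hx
        have hxA := mem_ids_iff_cnt.mp hx
        have hxi : x ≠ i := by rintro rfl; exact hxA hiA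
        have hxj : x ≠ j := by rintro rfl; exact hxA hjA
        refine (hfother x hxi hxj ?_).symm
        rintro ⟨x', hx', h1', hor'⟩
        exact hxA (hkey x x' hx' h1' hor').2.2.2.2.1
      have agreeB : ∀ x ∈ ids B, g x = f x := by
        intro x hx
        have hxB := mem_ids_iff_cnt.mp hx
        have hxi : x ≠ i := by rintro rfl; exact hxB hiB
        have hxj : x ≠ j := by rintro rfl; exact hxB hjB
        refine (hfother x hxi hxj ?_).symm
        rintro ⟨x', hx', h1', hor'⟩
        exact hxB (hkey x x' hx' h1' hor').2.2.2.2.2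
      have agreeC1 : ∀ x ∈ ids C, g x = (f ∘ ρ₁) x := by
        intro x hx
        by_cases h1 : cnt x (Φ.plug (Cirq.or m (Cirq.or k A B) C)) = 1
        · exact (hchoose (ρ₁ x) x hx h1 (Or.inl rfl)).symm
        · obtain ⟨e1, e2⟩ := hfix x hx h1
          show g x = f (ρ₁ x)
          rw [e1]
          refine (hfother x ?_ ?_ ?_).symm
          · rintro rfl
            have a := cnt_rename_le ρ₁ x C; rw [e1] at a
            have b := hone x hx; omega
          · rintro rfl
            have a := cnt_rename_le ρ₂ x C; rw [e2] at a
            have b := hone x hx; omega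
          · rintro ⟨x', hx', h1', hor'⟩
            have hs := hsing x x' hx' h1' hor'
            rw [cntPrem x] at hs
            have a := cnt_rename_le ρ₁ x C; rw [e1] at a
            have b := cnt_rename_le ρ₂ x C; rw [e2] at b
            have c := hone x hx
            omega
      have agreeC2 : ∀ x ∈ ids C, g x = (f ∘ ρ₂) x := by
        intro x hx
        by_cases h1 : cnt x (Φ.plug (Cirq.or m (Cirq.or k A B) C)) = 1
        · exact (hchoose (ρ₂ x) x hx h1 (Or.inr rfl)).symm
        · obtain ⟨e1, e2⟩ := hfix x hx h1
          show g x = f (ρ₂ x)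
          rw [e2]
          refine (hfother x ?_ ?_ ?_).symm
          · rintro rfl
            have a := cnt_rename_le ρ₁ x C; rw [e1] at a
            have b := hone x hx; omega
          · rintro rfl
            have a := cnt_rename_le ρ₂ x C; rw [e2] at a
            have b := hone x hx; omega
          · rintro ⟨x', hx', h1', hor'⟩
            have hs := hsing x x' hx' h1' hor'
            rw [cntPrem x] at hs
            have a := cnt_rename_le ρ₁ x C; rw [e1] at a
            have b := cnt_rename_le ρ₂ x C; rw [e2] at b
            have c := hone x hx
            omega
      simp only [metatrue] at hY ⊢
      rcases hY with ⟨hmv, ⟨hkv, hA⟩ | ⟨hkv, hB⟩⟩ | ⟨hmv, hC⟩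
      · exact Or.inl ⟨by rw [hfk, hkv], Or.inl ⟨by rw [hfi, hmv],
          (metatrue_agree agreeA).mp hA⟩⟩
      · exact Or.inr ⟨by rw [hfk, hkv], Or.inl ⟨by rw [hfj, hmv],
          (metatrue_agree agreeB).mp hB⟩⟩
      · cases hgk2 : g k
        · exact Or.inr ⟨by rw [hfk, hgk2], Or.inr ⟨by rw [hfj, hmv],
            metatrue_rename.mpr ((metatrue_agree agreeC2).mp hC)⟩⟩
        · exact Or.inl ⟨by rw [hfk, hgk2], Or.inr ⟨by rw [hfi, hmv],
            metatrue_rename.mpr ((metatrue_agree agreeC1).mp hC)⟩⟩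

  | ruleIIR_orS Φ A B C ρ₁ ρ₂ k i j m hij hik hjk him hjm hkm hi hj hm hfix hfresh hinj₁ hinj₂ =>
    classical
    have cntConcl : ∀ x, cnt x (Φ.plug (Cirq.or m C (Cirq.or k A B))) =
        cntCtx x Φ + ((if m = x then 1 else 0) + cnt x C +
          ((if k = x then 1 else 0) + cnt x A + cnt x B)) := by
      intro x; rw [cnt_plug]; rfl
    have cntPrem : ∀ x, cnt x (Φ.plug (Cirq.or k (Cirq.or i (rename ρ₁ C) A)
        (Cirq.or j (rename ρ₂ C) B))) =
        cntCtx x Φ + ((if k = x then 1 else 0) +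
          ((if i = x then 1 else 0) + cnt x (rename ρ₁ C) + cnt x A) +
          ((if j = x then 1 else 0) + cnt x (rename ρ₂ C) + cnt x B)) := by
      intro x; rw [cnt_plug]; rfl
    have hi0 := cntPrem i
    rw [hi, if_neg (Ne.symm hik), if_pos rfl, if_neg (Ne.symm hij)] at hi0
    have hj0 := cntPrem j
    rw [hj, if_neg (Ne.symm hjk), if_neg hij, if_pos rfl] at hj0
    have hm0 := cntConcl m
    rw [hm, if_pos rfl, if_neg hkm] at hm0
    have hiΦ : cntCtx i Φ = 0 := by omega
    have hiA : cnt i A = 0 := by omega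
    have hiR1 : cnt i (rename ρ₁ C) = 0 := by omega
    have hiB : cnt i B = 0 := by omega
    have hiR2 : cnt i (rename ρ₂ C) = 0 := by omega
    have hjΦ : cntCtx j Φ = 0 := by omega
    have hjA : cnt j A = 0 := by omega
    have hjR1 : cnt j (rename ρ₁ C) = 0 := by omega
    have hjB : cnt j B = 0 := by omega
    have hjR2 : cnt j (rename ρ₂ C) = 0 := by omega
    have hmΦ : cntCtx m Φ = 0 := by omega
    have hmA : cnt m A = 0 := by omega
    have hmB : cnt m B = 0 := by omega
    have hmC : cnt m C = 0 := by omega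
    constructor
    · rintro ⟨f, hf⟩
      set ρ : ℕ → ℕ := if f k = true then ρ₁ else ρ₂ with hρ
      set g : ℕ → Bool := fun x => if x = m then (if f k = true then f i else f j)
        else if x ∈ ids C ∧ cnt x (Φ.plug (Cirq.or m C (Cirq.or k A B))) = 1
          then f (ρ x) else f x with hgdef
      have hgm : g m = (if f k = true then f i else f j) := by simp [hgdef]
      have hgo : ∀ x, x ≠ m →
          ¬(x ∈ ids C ∧ cnt x (Φ.plug (Cirq.or m C (Cirq.or k A B))) = 1) → g x = f x := by
        intro x h1 h2; simp only [hgdef]; rw [if_neg h1, if_neg h2]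
      have hgS : ∀ x, x ∈ ids C → cnt x (Φ.plug (Cirq.or m C (Cirq.or k A B))) = 1 →
          g x = f (ρ x) := by
        intro x h1 h2
        have hxm : x ≠ m := by rintro rfl; exact (mem_ids_iff_cnt.mp h1) hmC
        simp only [hgdef]; rw [if_neg hxm, if_pos ⟨h1, h2⟩]
      have hCnot : ∀ x, x ∈ ids C → (cnt x A ≠ 0 ∨ cnt x B ≠ 0 ∨ cntCtx x Φ ≠ 0) →
          cnt x (Φ.plug (Cirq.or m C (Cirq.or k A B))) ≠ 1 := by
        intro x hx h
        have h1 := cntConcl x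
        have h2 : cnt x C ≠ 0 := mem_ids_iff_cnt.mp hx
        omega
      refine ⟨g, plug_mono Φ ?_ ?_ hf⟩
      swap
      · intro x hx
        have hxm : x ≠ m := by rintro rfl; exact hx hmΦ
        exact (hgo x hxm (fun h => hCnot x h.1 (Or.inr (Or.inr hx)) h.2)).symm
      intro hX
      have hgk : g k = f k := by
        refine hgo k hkm ?_
        rintro ⟨h1, h2⟩
        have h3 := cntConcl k
        rw [if_neg (Ne.symm hkm), if_pos rfl] at h3
        have h4 : cnt k C ≠ 0 := mem_ids_iff_cnt.mp h1
        omega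
      have agreeA : ∀ x ∈ ids A, f x = g x := by
        intro x hx
        have hxA := mem_ids_iff_cnt.mp hx
        have hxm : x ≠ m := by rintro rfl; exact hxA hmA
        exact (hgo x hxm (fun h => hCnot x h.1 (Or.inl hxA) h.2)).symm
      have agreeB : ∀ x ∈ ids B, f x = g x := by
        intro x hx
        have hxB := mem_ids_iff_cnt.mp hx
        have hxm : x ≠ m := by rintro rfl; exact hxB hmB
        exact (hgo x hxm (fun h => hCnot x h.1 (Or.inr (Or.inl hxB)) h.2)).symm
      have agreeC : ∀ x ∈ ids C, (f ∘ ρ) x = g x := by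
        intro x hx
        by_cases h2 : cnt x (Φ.plug (Cirq.or m C (Cirq.or k A B))) = 1
        · exact (hgS x hx h2).symm
        · obtain ⟨e1, e2⟩ := hfix x hx h2
          have hxm : x ≠ m := by rintro rfl; exact (mem_ids_iff_cnt.mp hx) hmC
          have hρx : ρ x = x := by
            by_cases hfk : f k = true <;> simp [hρ, hfk, e1, e2]
          rw [hgo x hxm (fun h => h2 h.2), Function.comp_apply, hρx]
      simp only [metatrue] at hX ⊢
      rcases hX with ⟨hk, ⟨hi2, hC⟩ | ⟨hi2, hA⟩⟩ | ⟨hk, ⟨hj2, hC⟩ | ⟨hj2, hB⟩⟩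
      · refine Or.inl ⟨by simp [hgm, hk, hi2], ?_⟩
        have hre : ρ = ρ₁ := by rw [hρ, if_pos hk]
        exact (metatrue_agree agreeC).mp (by rw [hre]; exact metatrue_rename.mp hC)
      · exact Or.inr ⟨by simp [hgm, hk, hi2], Or.inl ⟨by rw [hgk, hk],
          (metatrue_agree agreeA).mp hA⟩⟩
      · refine Or.inl ⟨by simp [hgm, hk, hj2], ?_⟩
        have hre : ρ = ρ₂ := by rw [hρ, if_neg (by simp [hk])]
        exact (metatrue_agree agreeC).mp (by rw [hre]; exact metatrue_rename.mp hC)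
      · exact Or.inr ⟨by simp [hgm, hk, hj2], Or.inr ⟨by rw [hgk, hk],
          (metatrue_agree agreeB).mp hB⟩⟩
    · rintro ⟨g, hg⟩
      set f : ℕ → Bool := fun y => if y = i ∨ y = j then g m
        else if h : ∃ x, x ∈ ids C ∧ cnt x (Φ.plug (Cirq.or m C (Cirq.or k A B))) = 1 ∧
            (ρ₁ x = y ∨ ρ₂ x = y) then g h.choose else g y with hfdef
      have hone : ∀ x ∈ ids C, 1 ≤ cnt x C :=
        fun x hx => Nat.one_le_iff_ne_zero.mpr (mem_ids_iff_cnt.mp hx)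
      have hcntren : ∀ y x, x ∈ ids C → (ρ₁ x = y ∨ ρ₂ x = y) →
          1 ≤ cnt y (rename ρ₁ C) + cnt y (rename ρ₂ C) := by
        rintro y x hx (rfl | rfl)
        · have h1 := cnt_rename_le ρ₁ x C; have h2 := hone x hx; omega
        · have h1 := cnt_rename_le ρ₂ x C; have h2 := hone x hx; omega
      have hsing : ∀ y x, x ∈ ids C → cnt x (Φ.plug (Cirq.or m C (Cirq.or k A B))) = 1 →
          (ρ₁ x = y ∨ ρ₂ x = y) →
          cnt y (Φ.plug (Cirq.or k (Cirq.or i (rename ρ₁ C) A) (Cirq.or j (rename ρ₂ C) B))) = 1 := by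
        rintro y x hx h1 (rfl | rfl)
        · exact (hfresh x hx h1).1
        · exact (hfresh x hx h1).2.1
      have hkey : ∀ y x, x ∈ ids C → cnt x (Φ.plug (Cirq.or m C (Cirq.or k A B))) = 1 →
          (ρ₁ x = y ∨ ρ₂ x = y) →
          y ≠ i ∧ y ≠ j ∧ y ≠ k ∧ cntCtx y Φ = 0 ∧ cnt y A = 0 ∧ cnt y B = 0 := by
        intro y x hx h1 hor
        have hs := hsing y x hx h1 hor
        have hr := hcntren y x hx hor
        rw [cntPrem y] at hs
        refine ⟨?_, ?_, ?_, by omega, by omega, by omega⟩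
        · rintro rfl; simp only [eq_self_iff_true, if_true] at hs; omega
        · rintro rfl; simp only [eq_self_iff_true, if_true] at hs; omega
        · rintro rfl; simp only [eq_self_iff_true, if_true] at hs; omega
      have hchoose : ∀ y x, x ∈ ids C → cnt x (Φ.plug (Cirq.or m C (Cirq.or k A B))) = 1 →
          (ρ₁ x = y ∨ ρ₂ x = y) → f y = g x := by
        intro y x hx h1 hor
        obtain ⟨hyi, hyj, -, -, -, -⟩ := hkey y x hx h1 hor
        have hex : ∃ x', x' ∈ ids C ∧ cnt x' (Φ.plug (Cirq.or m C (Cirq.or k A B))) = 1 ∧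
            (ρ₁ x' = y ∨ ρ₂ x' = y) := ⟨x, hx, h1, hor⟩
        have hstep : f y = g hex.choose := by
          simp only [hfdef]; rw [if_neg (not_or.mpr ⟨hyi, hyj⟩), dif_pos hex]
        rw [hstep]
        obtain ⟨hx', h1', hor'⟩ := hex.choose_spec
        suffices hceq : hex.choose = x by rw [hceq]
        have hs := hsing y x hx h1 hor
        rw [cntPrem y] at hs
        rcases hor' with e1 | e2 <;> rcases hor with o1 | o2
        · exact hinj₁ hx' hx (e1.trans o1.symm)
        · exfalso
          have a1 := cnt_rename_le ρ₁ hex.choose C; rw [e1] at a1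
          have a2 := cnt_rename_le ρ₂ x C; rw [o2] at a2
          have b1 := hone _ hx'; have b2 := hone x hx
          omega
        · exfalso
          have a1 := cnt_rename_le ρ₂ hex.choose C; rw [e2] at a1
          have a2 := cnt_rename_le ρ₁ x C; rw [o1] at a2
          have b1 := hone _ hx'; have b2 := hone x hx
          omega
        · exact hinj₂ hx' hx (e2.trans o2.symm)
      have hfother : ∀ y, y ≠ i → y ≠ j →
          (¬ ∃ x, x ∈ ids C ∧ cnt x (Φ.plug (Cirq.or m C (Cirq.or k A B))) = 1 ∧
            (ρ₁ x = y ∨ ρ₂ x = y)) → f y = g y := by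
        intro y h1 h2 h3; simp only [hfdef]; rw [if_neg (not_or.mpr ⟨h1, h2⟩), dif_neg h3]
      have hfi : f i = g m := by simp [hfdef]
      have hfj : f j = g m := by simp [hfdef]
      refine ⟨f, plug_mono Φ ?_ ?_ hg⟩
      swap
      · intro x hx
        have hxi : x ≠ i := by rintro rfl; exact hx hiΦ
        have hxj : x ≠ j := by rintro rfl; exact hx hjΦ
        refine (hfother x hxi hxj ?_).symm
        rintro ⟨x', hx', h1', hor'⟩
        exact hx (hkey x x' hx' h1' hor').2.2.2.1
      intro hY
      have hfk : f k = g k := by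
        refine hfother k (Ne.symm hik) (Ne.symm hjk) ?_
        rintro ⟨x', hx', h1', hor'⟩
        exact (hkey k x' hx' h1' hor').2.2.1 rfl
      have agreeA : ∀ x ∈ ids A, g x = f x := by
        intro x hx
        have hxA := mem_ids_iff_cnt.mp hx
        have hxi : x ≠ i := by rintro rfl; exact hxA hiA
        have hxj : x ≠ j := by rintro rfl; exact hxA hjA
        refine (hfother x hxi hxj ?_).symm
        rintro ⟨x', hx', h1', hor'⟩
        exact hxA (hkey x x' hx' h1' hor').2.2.2.2.1
      have agreeB : ∀ x ∈ ids B, g x = f x := by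
        intro x hx
        have hxB := mem_ids_iff_cnt.mp hx
        have hxi : x ≠ i := by rintro rfl; exact hxB hiB
        have hxj : x ≠ j := by rintro rfl; exact hxB hjB
        refine (hfother x hxi hxj ?_).symm
        rintro ⟨x', hx', h1', hor'⟩
        exact hxB (hkey x x' hx' h1' hor').2.2.2.2.2
      have agreeC1 : ∀ x ∈ ids C, g x = (f ∘ ρ₁) x := by
        intro x hx
        by_cases h1 : cnt x (Φ.plug (Cirq.or m C (Cirq.or k A B))) = 1
        · exact (hchoose (ρ₁ x) x hx h1 (Or.inl rfl)).symm
        · obtain ⟨e1, e2⟩ := hfix x hx h1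
          show g x = f (ρ₁ x)
          rw [e1]
          refine (hfother x ?_ ?_ ?_).symm
          · rintro rfl
            have a := cnt_rename_le ρ₁ x C; rw [e1] at a
            have b := hone x hx; omega
          · rintro rfl
            have a := cnt_rename_le ρ₂ x C; rw [e2] at a
            have b := hone x hx; omega
          · rintro ⟨x', hx', h1', hor'⟩
            have hs := hsing x x' hx' h1' hor'
            rw [cntPrem x] at hs
            have a := cnt_rename_le ρ₁ x C; rw [e1] at a
            have b := cnt_rename_le ρ₂ x C; rw [e2] at b
            have c := hone x hx
            omega
      have agreeC2 : ∀ x ∈ ids C, g x = (f ∘ ρ₂) x := by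
        intro x hx
        by_cases h1 : cnt x (Φ.plug (Cirq.or m C (Cirq.or k A B))) = 1
        · exact (hchoose (ρ₂ x) x hx h1 (Or.inr rfl)).symm
        · obtain ⟨e1, e2⟩ := hfix x hx h1
          show g x = f (ρ₂ x)
          rw [e2]
          refine (hfother x ?_ ?_ ?_).symm
          · rintro rfl
            have a := cnt_rename_le ρ₁ x C; rw [e1] at a
            have b := hone x hx; omega
          · rintro rfl
            have a := cnt_rename_le ρ₂ x C; rw [e2] at a
            have b := hone x hx; omega
          · rintro ⟨x', hx', h1', hor'⟩
            have hs := hsing x x' hx' h1' hor'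
            rw [cntPrem x] at hs
            have a := cnt_rename_le ρ₁ x C; rw [e1] at a
            have b := cnt_rename_le ρ₂ x C; rw [e2] at b
            have c := hone x hx
            omega
      simp only [metatrue] at hY ⊢
      rcases hY with ⟨hmv, hC⟩ | ⟨hmv, ⟨hkv, hA⟩ | ⟨hkv, hB⟩⟩
      · cases hgk2 : g k
        · exact Or.inr ⟨by rw [hfk, hgk2], Or.inl ⟨by rw [hfj, hmv],
            metatrue_rename.mpr ((metatrue_agree agreeC2).mp hC)⟩⟩
        · exact Or.inl ⟨by rw [hfk, hgk2], Or.inl ⟨by rw [hfi, hmv],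
            metatrue_rename.mpr ((metatrue_agree agreeC1).mp hC)⟩⟩
      · exact Or.inl ⟨by rw [hfk, hkv], Or.inr ⟨by rw [hfi, hmv],
          (metatrue_agree agreeA).mp hA⟩⟩
      · exact Or.inr ⟨by rw [hfk, hkv], Or.inr ⟨by rw [hfj, hmv],
          (metatrue_agree agreeB).mp hB⟩⟩
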